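/- arXiv:1707.06344 — 6 statements merged into one kernel-verified Lean document; each statement's English description precedes it below -/
import Mathlib

section
/- Let G be a linearly ordered abelian group, n a positive integer, and a ∈ G with a ∉ nG. Then the collection of convex subgroups H of G such that a ∉ H + nG is nonempty and has a greatest element (with respect to inclusion). (This element is denoted H_n(a).) -/
/-- A subgroup `H` of a linearly ordered abelian group is convex if
`0 ≤ g ≤ h` with `h ∈ H` implies `g ∈ H`. -/
def IsConvexSubgroup {G : Type*} [AddCommGroup G] [LinearOrder G] [IsOrderedAddMonoid G] (H : AddSubgroup G) : Prop :=
  ∀ g h : G, h ∈ H → 0 ≤ g → g ≤ h → g ∈ H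

/-- `a` lies in `H + nG`, i.e. `a = h + n•g` for some `h ∈ H` and `g ∈ G`. -/
def MemAddNSMul {G : Type*} [AddCommGroup G] (H : AddSubgroup G) (n : ℕ) (a : G) : Prop :=
  ∃ h ∈ H, ∃ g : G, a = h + n • g

/-!
Convex subgroups of a linearly ordered group form a chain: if `x ∈ H \ K`, every element
of `K` is smaller than `x` in absolute value, hence lies in `H`. So the union of all convex
subgroups `H` with `a ∉ H + nG` is again a subgroup; it is convex, and it still avoids `a`
because a witness `a = h + n • g` involves a single element `h`, which already lies in one
member of the chain. The trivial subgroup belongs to the family since `a ∉ nG`.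
-/

section

variable {G : Type*} [AddCommGroup G]

theorem memAddNSMul_bot_iff {n : ℕ} {a : G} : MemAddNSMul ⊥ n a ↔ ∃ g : G, a = n • g := by
  simp [MemAddNSMul]

theorem memAddNSMul_sSup_iff {S : Set (AddSubgroup G)} (hne : S.Nonempty)
    (hS : DirectedOn (· ≤ ·) S) {n : ℕ} {a : G} :
    MemAddNSMul (sSup S) n a ↔ ∃ H ∈ S, MemAddNSMul H n a := by
  constructor
  · rintro ⟨h, hh, g, rfl⟩
    obtain ⟨H, hHS, hhH⟩ := (AddSubgroup.mem_sSup_of_directedOn hne hS).mp hh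
    exact ⟨H, hHS, h, hhH, g, rfl⟩
  · rintro ⟨H, hHS, h, hhH, g, rfl⟩
    exact ⟨h, AddSubgroup.mem_sSup_of_mem hHS hhH, g, rfl⟩

variable [LinearOrder G] [IsOrderedAddMonoid G]

theorem isConvexSubgroup_bot : IsConvexSubgroup (⊥ : AddSubgroup G) := by
  intro g h hh hg hgh
  rw [AddSubgroup.mem_bot] at hh ⊢
  exact le_antisymm (hgh.trans_eq hh) hg

theorem IsConvexSubgroup.mem_of_abs_le {H : AddSubgroup G} (hH : IsConvexSubgroup H)
    {x y : G} (hx : x ∈ H) (hyx : |y| ≤ |x|) : y ∈ H :=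
  abs_mem_iff.mp (hH _ _ (abs_mem_iff.mpr hx) (abs_nonneg y) hyx)

theorem isChain_isConvexSubgroup : IsChain (· ≤ ·) {H : AddSubgroup G | IsConvexSubgroup H} := by
  intro H hH K hK _
  by_contra! hHK
  obtain ⟨x, hxH, hxK⟩ := SetLike.not_le_iff_exists.mp hHK.1
  obtain ⟨y, hyK, hyH⟩ := SetLike.not_le_iff_exists.mp hHK.2
  rcases le_total |y| |x| with hyx | hxy
  · exact hyH (hH.mem_of_abs_le hxH hyx)
  · exact hxK (hK.mem_of_abs_le hyK hxy)

theorem isConvexSubgroup_sSup {S : Set (AddSubgroup G)} (hS : ∀ H ∈ S, IsConvexSubgroup H) :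
    IsConvexSubgroup (sSup S) := by
  rcases S.eq_empty_or_nonempty with rfl | hne
  · rw [sSup_empty]
    exact isConvexSubgroup_bot
  have hdir : DirectedOn (· ≤ ·) S := (isChain_isConvexSubgroup.mono hS).directedOn
  intro g h hh hg hgh
  obtain ⟨H, hHS, hhH⟩ := (AddSubgroup.mem_sSup_of_directedOn hne hdir).mp hh
  exact AddSubgroup.mem_sSup_of_mem hHS (hS H hHS g h hhH hg hgh)

end

theorem exists_greatest_convex_subgroup_general {G : Type*} [AddCommGroup G] [LinearOrder G] [IsOrderedAddMonoid G]
    (n : ℕ) (a : G) (ha : ¬ ∃ g : G, a = n • g) :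
    ∃ A : AddSubgroup G, IsConvexSubgroup A ∧ ¬ MemAddNSMul A n a ∧
      ∀ H : AddSubgroup G, IsConvexSubgroup H → ¬ MemAddNSMul H n a → H ≤ A := by
  set S := {H : AddSubgroup G | IsConvexSubgroup H ∧ ¬ MemAddNSMul H n a}
  have hbot : ⊥ ∈ S := ⟨isConvexSubgroup_bot, memAddNSMul_bot_iff.not.mpr ha⟩
  have hdir : DirectedOn (· ≤ ·) S :=
    (isChain_isConvexSubgroup.mono fun _ hH => hH.1).directedOn
  refine ⟨sSup S, isConvexSubgroup_sSup fun H hH => hH.1, ?_,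
    fun H hH hHa => le_sSup ⟨hH, hHa⟩⟩
  rw [memAddNSMul_sSup_iff ⟨⊥, hbot⟩ hdir]
  rintro ⟨H, hHS, hHa⟩
  exact hHS.2 hHa

/-- For `a ∉ nG`, the collection of convex subgroups `H` with `a ∉ H + nG` is nonempty
and has a greatest element `H_n(a)`. -/
theorem exists_greatest_convex_subgroup {G : Type*} [AddCommGroup G] [LinearOrder G] [IsOrderedAddMonoid G]
    (n : ℕ) (hn : 0 < n) (a : G) (ha : ¬ ∃ g : G, a = n • g) :
    ∃ A : AddSubgroup G, IsConvexSubgroup A ∧ ¬ MemAddNSMul A n a ∧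
      ∀ H : AddSubgroup G, IsConvexSubgroup H → ¬ MemAddNSMul H n a → H ≤ A :=
  exists_greatest_convex_subgroup_general n a ha
end

section
/- Let G be a linearly ordered abelian group and p a positive integer such that the quotient group G/pG is finite. Then the set of subgroups of G of the form H_p(a) — that is, the set of convex subgroups A for which there exists a ∈ G with a ∉ A + pG and such that every convex subgroup H with a ∉ H + pG satisfies H ⊆ A — is finite. -/
/-- The subgroup `nG = {n • g : g ∈ G}` of an abelian group `G`. -/
def nSMulSubgroup (G : Type*) [AddCommGroup G] (n : ℕ) : AddSubgroup G where
  carrier := Set.range fun g : G => n • g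
  zero_mem' := ⟨0, smul_zero n⟩
  add_mem' := by
    rintro _ _ ⟨g, rfl⟩ ⟨g', rfl⟩
    exact ⟨g + g', smul_add n g g'⟩
  neg_mem' := by
    rintro _ ⟨g, rfl⟩
    exact ⟨-g, by simp [smul_neg]⟩

/-!
`H_p(a)` is the greatest element of the set of convex subgroups `H` with `a ∉ H + pG`, and that set
only depends on the class of `a` in `G/pG`. So each class carries at most one `H_p(a)`, and there
are at most `|G/pG|` of them.
-/

section MemAddNSMul

variable {G : Type*} [AddCommGroup G]

theorem MemAddNSMul.add_nsmul {H : AddSubgroup G} {n : ℕ} {a : G} (h : MemAddNSMul H n a)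
    (g : G) : MemAddNSMul H n (a + n • g) := by
  obtain ⟨h₀, hh₀, g₀, rfl⟩ := h
  exact ⟨h₀, hh₀, g₀ + g, by rw [smul_add, add_assoc]⟩

theorem memAddNSMul_add_nsmul_iff {H : AddSubgroup G} {n : ℕ} {a : G} (g : G) :
    MemAddNSMul H n (a + n • g) ↔ MemAddNSMul H n a :=
  ⟨fun h => by simpa [smul_neg] using h.add_nsmul (-g), fun h => h.add_nsmul g⟩

theorem memAddNSMul_congr {H : AddSubgroup G} {n : ℕ} {a b : G}
    (hab : (a : G ⧸ nSMulSubgroup G n) = b) : MemAddNSMul H n a ↔ MemAddNSMul H n b := by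
  obtain ⟨g, hg⟩ := QuotientAddGroup.eq.mp hab
  have hb : b = a + n • g := by
    rw [show n • g = -a + b from hg]
    abel
  rw [hb, memAddNSMul_add_nsmul_iff]

end MemAddNSMul

section ConvexAvoiding

variable {G : Type*} [AddCommGroup G] [LinearOrder G] [IsOrderedAddMonoid G]

def convexAvoiding (p : ℕ) (a : G) : Set (AddSubgroup G) :=
  {H | IsConvexSubgroup H ∧ ¬ MemAddNSMul H p a}

theorem convexAvoiding_congr {p : ℕ} {a b : G} (hab : (a : G ⧸ nSMulSubgroup G p) = b) :
    convexAvoiding p a = convexAvoiding p b := by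
  ext H
  simp only [convexAvoiding, Set.mem_ofPred_eq, memAddNSMul_congr hab]

theorem isGreatest_convexAvoiding_out {p : ℕ} {a : G} {A : AddSubgroup G}
    (hA : IsGreatest (convexAvoiding p a) A) :
    IsGreatest (convexAvoiding p (a : G ⧸ nSMulSubgroup G p).out) A := by
  rwa [convexAvoiding_congr (QuotientAddGroup.out_eq' _)]

end ConvexAvoiding

theorem finitely_many_Hp_general {G : Type*} [AddCommGroup G] [LinearOrder G] [IsOrderedAddMonoid G]
    (p : ℕ) (hfin : Finite (G ⧸ nSMulSubgroup G p)) :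
    {A : AddSubgroup G | IsConvexSubgroup A ∧ ∃ a : G, ¬ MemAddNSMul A p a ∧
      ∀ H : AddSubgroup G, IsConvexSubgroup H → ¬ MemAddNSMul H p a → H ≤ A}.Finite := by
  have hunique : ∀ q : G ⧸ nSMulSubgroup G p,
      {A | IsGreatest (convexAvoiding p q.out) A}.Subsingleton :=
    fun _ _ hA _ hB => hA.unique hB
  refine (Set.finite_iUnion fun q => (hunique q).finite).subset ?_
  rintro A ⟨hconv, a, ha, hmax⟩
  have hA : IsGreatest (convexAvoiding p a) A :=
    ⟨⟨hconv, ha⟩, fun H ⟨hHconv, hH⟩ => hmax H hHconv hH⟩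
  exact Set.mem_iUnion.mpr ⟨a, isGreatest_convexAvoiding_out hA⟩

/-- If `G/pG` is finite then there are only finitely many subgroups of the form `H_p(a)`. -/
theorem finitely_many_Hp {G : Type*} [AddCommGroup G] [LinearOrder G] [IsOrderedAddMonoid G]
    (p : ℕ) (hp : 0 < p) (hfin : Finite (G ⧸ nSMulSubgroup G p)) :
    {A : AddSubgroup G | IsConvexSubgroup A ∧ ∃ a : G, ¬ MemAddNSMul A p a ∧
      ∀ H : AddSubgroup G, IsConvexSubgroup H → ¬ MemAddNSMul H p a → H ≤ A}.Finite :=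
  finitely_many_Hp_general p hfin
end

section
/- Let G be a linearly ordered abelian group, p a prime, i a natural number, and let E ⊆ F be convex subgroups of G. Suppose f₀, f₁ ∈ G satisfy f₀ ∈ F and f₁ ∉ F + pG. Then p^i•f₀ - p^i•f₁ ∉ E + p^{i+1}G. -/
/-!
Writing `p^i•(f₀ - f₁) = e + p^i•(p•g)` with `e ∈ E`, convexity of `E` lets one divide by `p^i`:
`f₀ - f₁ - p•g ∈ E ⊆ F`, because `x` lies between `0` and `p^i•x` (or between `p^i•x` and `0`).
Since `f₀ ∈ F`, this puts `f₁` in `F + pG`.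
-/

section

variable {G : Type*} [AddCommGroup G]

theorem MemAddNSMul.mono {H K : AddSubgroup G} (hHK : H ≤ K) {n : ℕ} {a : G}
    (ha : MemAddNSMul H n a) : MemAddNSMul K n a := by
  obtain ⟨h, hh, g, rfl⟩ := ha
  exact ⟨h, hHK hh, g, rfl⟩

theorem MemAddNSMul.of_sub_left {H : AddSubgroup G} {n : ℕ} {a b : G} (hb : b ∈ H)
    (hba : MemAddNSMul H n (b - a)) : MemAddNSMul H n a := by
  obtain ⟨h, hh, g, hbg⟩ := hba
  refine ⟨b - h, H.sub_mem hb hh, -g, ?_⟩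
  rw [smul_neg, eq_sub_of_add_eq hbg.symm]
  abel

end

section

variable {G : Type*} [AddCommGroup G] [LinearOrder G] [IsOrderedAddMonoid G]

theorem IsConvexSubgroup.mem_of_nsmul_mem {H : AddSubgroup G} (hH : IsConvexSubgroup H)
    {n : ℕ} (hn : n ≠ 0) {x : G} (hx : n • x ∈ H) : x ∈ H := by
  rcases le_total 0 x with hx₀ | hx₀
  · exact hH x (n • x) hx hx₀ (le_self_nsmul hx₀ hn)
  · have hnx : n • -x ∈ H := by rw [smul_neg]; exact H.neg_mem hx
    have hx₀' : 0 ≤ -x := neg_nonneg.mpr hx₀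
    exact neg_mem_iff.mp (hH (-x) (n • -x) hnx hx₀' (le_self_nsmul hx₀' hn))

theorem MemAddNSMul.of_nsmul {H : AddSubgroup G} (hH : IsConvexSubgroup H) {n m : ℕ}
    (hn : n ≠ 0) {a : G} (ha : MemAddNSMul H (n * m) (n • a)) : MemAddNSMul H m a := by
  obtain ⟨h, hh, g, hag⟩ := ha
  have hdiv : n • (a - m • g) = h := by
    rw [smul_sub, ← mul_smul, hag, add_sub_cancel_right]
  exact ⟨a - m • g, hH.mem_of_nsmul_mem hn (hdiv ▸ hh), g, (sub_add_cancel _ _).symm⟩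

end

theorem row_inconsistency_general {G : Type*} [AddCommGroup G] [LinearOrder G] [IsOrderedAddMonoid G]
    (p : ℕ) (hp : p.Prime) (i : ℕ) (E F : AddSubgroup G)
    (hEconv : IsConvexSubgroup E) (hEF : E ≤ F)
    (f₀ f₁ : G) (hf₀ : f₀ ∈ F) (hf₁ : ¬ MemAddNSMul F p f₁) :
    ¬ MemAddNSMul E (p ^ (i + 1)) (p ^ i • f₀ - p ^ i • f₁) := by
  intro h
  rw [← smul_sub, pow_succ] at h
  have hdiff : MemAddNSMul E p (f₀ - f₁) := h.of_nsmul hEconv (pow_ne_zero i hp.ne_zero)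
  exact hf₁ ((hdiff.mono hEF).of_sub_left hf₀)

/-- If `E ⊆ F` are convex, `f₀ ∈ F` and `f₁ ∉ F + pG`,
then `p^i•f₀ - p^i•f₁ ∉ E + p^{i+1}G`. -/
theorem row_inconsistency {G : Type*} [AddCommGroup G] [LinearOrder G] [IsOrderedAddMonoid G]
    (p : ℕ) (hp : p.Prime) (i : ℕ) (E F : AddSubgroup G)
    (hEconv : IsConvexSubgroup E) (hFconv : IsConvexSubgroup F) (hEF : E ≤ F)
    (f₀ f₁ : G) (hf₀ : f₀ ∈ F) (hf₁ : ¬ MemAddNSMul F p f₁) :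
    ¬ MemAddNSMul E (p ^ (i + 1)) (p ^ i • f₀ - p ^ i • f₁) :=
  row_inconsistency_general p hp i E F hEconv hEF f₀ f₁ hf₀ hf₁
end

section
/- Let G be a linearly ordered abelian group, H a convex subgroup of G, p and k positive integers, ℓ a positive integer, and a', t, x ∈ G with t - p•a' ∈ H. Then (p·k)•x - t ∈ H + p^ℓ G if and only if k•x - a' ∈ H + p^{ℓ-1}G. -/
/-
Write `(p k)•x - t = p•(k•x - a') - (t - p•a')`. Membership in `H + nG` is insensitive to
adding elements of `H`, so the claim reduces to `p•y ∈ H + p^ℓ G ↔ y ∈ H + p^(ℓ-1) G`.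
The nontrivial direction divides by `p`: a convex subgroup is closed under taking `p`-th parts,
since `0 ≤ |y| ≤ |p•y|`.
-/

section

variable {G : Type*} [AddCommGroup G]

theorem memAddNSMul_add_right_iff {H : AddSubgroup G} {n : ℕ} {a c : G} (hc : c ∈ H) :
    MemAddNSMul H n (a + c) ↔ MemAddNSMul H n a := by
  constructor
  · rintro ⟨h, hh, g, hg⟩
    exact ⟨h - c, H.sub_mem hh hc, g, by rw [← add_sub_cancel_right a c, hg]; abel⟩
  · rintro ⟨h, hh, g, rfl⟩
    exact ⟨h + c, H.add_mem hh hc, g, by abel⟩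

theorem MemAddNSMul.nsmul {H : AddSubgroup G} {n : ℕ} {y : G} (p : ℕ) (hy : MemAddNSMul H n y) :
    MemAddNSMul H (p * n) (p • y) := by
  obtain ⟨h, hh, g, rfl⟩ := hy
  exact ⟨p • h, H.nsmul_mem hh p, g, by rw [smul_add, mul_smul]⟩

variable [LinearOrder G] [IsOrderedAddMonoid G]

theorem IsConvexSubgroup.mem_of_nsmul_mem_s10 {H : AddSubgroup G} (hH : IsConvexSubgroup H)
    {p : ℕ} (hp : p ≠ 0) {y : G} (hy : p • y ∈ H) : y ∈ H := by
  have hle : |y| ≤ |p • y| := by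
    rw [abs_nsmul]
    exact le_self_nsmul (abs_nonneg y) hp
  exact abs_mem_iff.mp <|
    hH |y| |p • y| (abs_mem_iff.mpr hy) (abs_nonneg y) hle

theorem IsConvexSubgroup.memAddNSMul_mul_nsmul_iff {H : AddSubgroup G} (hH : IsConvexSubgroup H)
    {p : ℕ} (hp : p ≠ 0) (n : ℕ) (y : G) :
    MemAddNSMul H (p * n) (p • y) ↔ MemAddNSMul H n y := by
  refine ⟨?_, MemAddNSMul.nsmul p⟩
  rintro ⟨h, hh, g, hg⟩
  have hdiv : p • (y - n • g) = h := by
    rw [smul_sub, ← mul_smul, hg, add_sub_cancel_right]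
  exact ⟨y - n • g, hH.mem_of_nsmul_mem_s10 hp (hdiv ▸ hh), g, by abel⟩

end

theorem reduce_coefficient_general {G : Type*} [AddCommGroup G] [LinearOrder G] [IsOrderedAddMonoid G]
    (H : AddSubgroup G) (hH : IsConvexSubgroup H)
    (p k ℓ : ℕ) (hp : 0 < p) (hℓ : 0 < ℓ)
    (a' t x : G) (ht : t - p • a' ∈ H) :
    MemAddNSMul H (p ^ ℓ) ((p * k) • x - t) ↔
      MemAddNSMul H (p ^ (ℓ - 1)) (k • x - a') := by
  obtain ⟨m, rfl⟩ := Nat.exists_eq_add_of_lt hℓ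
  have hsplit : (p * k) • x - t = p • (k • x - a') + -(t - p • a') := by
    rw [mul_smul, smul_sub]; abel
  rw [hsplit, memAddNSMul_add_right_iff (H.neg_mem ht), zero_add, Nat.add_sub_cancel, pow_succ',
    hH.memAddNSMul_mul_nsmul_iff hp.ne']

/-- If `t - p•a' ∈ H` with `H` convex, then
`(pk)•x - t ∈ H + p^ℓ G` iff `k•x - a' ∈ H + p^{ℓ-1} G`. -/
theorem reduce_coefficient {G : Type*} [AddCommGroup G] [LinearOrder G] [IsOrderedAddMonoid G]
    (H : AddSubgroup G) (hH : IsConvexSubgroup H)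
    (p k ℓ : ℕ) (hp : 0 < p) (hk : 0 < k) (hℓ : 0 < ℓ)
    (a' t x : G) (ht : t - p • a' ∈ H) :
    MemAddNSMul H (p ^ ℓ) ((p * k) • x - t) ↔
      MemAddNSMul H (p ^ (ℓ - 1)) (k • x - a') :=
  reduce_coefficient_general H hH p k ℓ hp hℓ a' t x ht
end

section
/- Let G be a linearly ordered abelian group, A ⊆ B convex subgroups of G, n a positive integer, and z ∈ G with z ∈ B + nG and z ∉ A + nG. Then there exists a convex subgroup C of G such that: z ∉ C + nG; every convex subgroup H with z ∉ H + nG satisfies H ⊆ C (i.e., C is the greatest such subgroup); and A ⊆ C while C is strictly contained in B. -/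
section

variable {G : Type*} [AddCommGroup G]

theorem not_memAddNSMul_sSup_of_directedOn {S : Set (AddSubgroup G)} (hne : S.Nonempty)
    (hdir : DirectedOn (· ≤ ·) S) {n : ℕ} {a : G} (hS : ∀ H ∈ S, ¬ MemAddNSMul H n a) :
    ¬ MemAddNSMul (sSup S) n a := by
  rintro ⟨h, hh, g, rfl⟩
  obtain ⟨H, hHS, hhH⟩ := (AddSubgroup.mem_sSup_of_directedOn hne hdir).1 hh
  exact hS H hHS ⟨h, hhH, g, rfl⟩

variable [LinearOrder G] [IsOrderedAddMonoid G]

theorem IsConvexSubgroup.le_total {H K : AddSubgroup G} (hH : IsConvexSubgroup H)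
    (hK : IsConvexSubgroup K) : H ≤ K ∨ K ≤ H := by
  refine or_iff_not_imp_left.2 fun hHK k hk => ?_
  obtain ⟨h, hhH, hhK⟩ := SetLike.not_le_iff_exists.1 hHK
  have hkh : |k| ≤ |h| := le_of_not_ge fun hhk =>
    hhK (abs_mem_iff.1 (hK |h| |k| (abs_mem_iff.2 hk) (abs_nonneg h) hhk))
  exact abs_mem_iff.1 (hH |k| |h| (abs_mem_iff.2 hhH) (abs_nonneg k) hkh)

theorem IsConvexSubgroup.sSup_of_directedOn {S : Set (AddSubgroup G)} (hne : S.Nonempty)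
    (hdir : DirectedOn (· ≤ ·) S) (hS : ∀ H ∈ S, IsConvexSubgroup H) :
    IsConvexSubgroup (sSup S) := by
  intro g h hh hg hgh
  obtain ⟨H, hHS, hhH⟩ := (AddSubgroup.mem_sSup_of_directedOn hne hdir).1 hh
  exact AddSubgroup.mem_sSup_of_mem hHS (hS H hHS g h hhH hg hgh)

theorem isGreatest_sSup_isConvexSubgroup_not_memAddNSMul {A : AddSubgroup G}
    (hA : IsConvexSubgroup A) {n : ℕ} {z : G} (hzA : ¬ MemAddNSMul A n z) :
    IsGreatest {H | IsConvexSubgroup H ∧ ¬ MemAddNSMul H n z}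
      (sSup {H | IsConvexSubgroup H ∧ ¬ MemAddNSMul H n z}) := by
  set S := {H : AddSubgroup G | IsConvexSubgroup H ∧ ¬ MemAddNSMul H n z}
  have hne : S.Nonempty := ⟨A, hA, hzA⟩
  have hdir : DirectedOn (· ≤ ·) S :=
    IsChain.directedOn fun H hH K hK _ => hH.1.le_total hK.1
  exact ⟨⟨.sSup_of_directedOn hne hdir fun H hH => hH.1,
    not_memAddNSMul_sSup_of_directedOn hne hdir fun H hH => hH.2⟩, fun _ => le_sSup⟩

end

theorem exists_greatest_between_general {G : Type*} [AddCommGroup G] [LinearOrder G] [IsOrderedAddMonoid G]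
    (A B : AddSubgroup G) (hAconv : IsConvexSubgroup A) (hBconv : IsConvexSubgroup B)
    (n : ℕ) (z : G)
    (hzB : MemAddNSMul B n z) (hzA : ¬ MemAddNSMul A n z) :
    ∃ C : AddSubgroup G, IsConvexSubgroup C ∧ ¬ MemAddNSMul C n z ∧
      (∀ H : AddSubgroup G, IsConvexSubgroup H → ¬ MemAddNSMul H n z → H ≤ C) ∧
      A ≤ C ∧ C < B := by
  obtain ⟨⟨hCconv, hCz⟩, hCgreatest⟩ :=
    isGreatest_sSup_isConvexSubgroup_not_memAddNSMul hAconv hzA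
  have hCB : sSup _ ≤ B :=
    (hCconv.le_total hBconv).resolve_right fun hBC => hCz (hzB.mono hBC)
  refine ⟨_, hCconv, hCz, fun H hH hHz => hCgreatest ⟨hH, hHz⟩, hCgreatest ⟨hAconv, hzA⟩,
    hCB.lt_of_ne ?_⟩
  rintro rfl
  exact hCz hzB

/-- If `A ⊆ B` are convex, `z ∈ B + nG` and `z ∉ A + nG`, then the greatest convex
subgroup `C` with `z ∉ C + nG` exists and satisfies `A ⊆ C ⊊ B`. -/
theorem exists_greatest_between {G : Type*} [AddCommGroup G] [LinearOrder G] [IsOrderedAddMonoid G]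
    (A B : AddSubgroup G) (hAconv : IsConvexSubgroup A) (hBconv : IsConvexSubgroup B)
    (hAB : A ≤ B) (n : ℕ) (hn : 0 < n) (z : G)
    (hzB : MemAddNSMul B n z) (hzA : ¬ MemAddNSMul A n z) :
    ∃ C : AddSubgroup G, IsConvexSubgroup C ∧ ¬ MemAddNSMul C n z ∧
      (∀ H : AddSubgroup G, IsConvexSubgroup H → ¬ MemAddNSMul H n z → H ≤ C) ∧
      A ≤ C ∧ C < B :=
  exists_greatest_between_general A B hAconv hBconv n z hzB hzA
end

section
/- Let p be a prime, let ℤ_{(p)} be the subring of ℚ consisting of all rationals expressible as a/b with a, b integers and b not divisible by p, let B be a subset of ℝ that is linearly independent over ℤ_{(p)} (viewing ℝ as a ℤ_{(p)}-module via ℤ_{(p)} ⊆ ℚ ⊆ ℝ), and let G_p be the additive subgroup of ℝ underlying the ℤ_{(p)}-submodule spanned by B. Then for every natural number j and all distinct b, b' ∈ B, the elements p^j•b and p^j•b' lie in distinct cosets of p^{j+1}G_p; that is, p^j•b - p^j•b' ∉ p^{j+1}G_p. -/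
/-- The set of rationals expressible as `a / b` with `b` not divisible by `p`,
i.e. the localization `ℤ_{(p)}` realized inside `ℚ`. -/
def ZLocSet (p : ℕ) : Set ℚ :=
  {q : ℚ | ∃ a b : ℤ, ¬ (p : ℤ) ∣ b ∧ q = (a : ℚ) / (b : ℚ)}

/-- The additive subgroup of `ℝ` underlying the `ℤ_{(p)}`-submodule spanned by `B`:
the additive closure of all products `q * b` with `q ∈ ℤ_{(p)}` and `b ∈ B`. -/
def GpSubgroup (p : ℕ) (B : Set ℝ) : AddSubgroup ℝ :=
  AddSubgroup.closure {y : ℝ | ∃ q ∈ ZLocSet p, ∃ b ∈ B, y = (q : ℝ) * b}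

/-- `B ⊆ ℝ` is linearly independent over `ℤ_{(p)}`: any finite `ℤ_{(p)}`-linear
combination of elements of `B` which vanishes has all coefficients zero. -/
def LinIndepOverZLoc (p : ℕ) (B : Set ℝ) : Prop :=
  ∀ (t : Finset ℝ) (c : ℝ → ℚ), ↑t ⊆ B → (∀ x ∈ t, c x ∈ ZLocSet p) →
    (∑ x ∈ t, (c x : ℝ) * x) = 0 → ∀ x ∈ t, c x = 0

/-! Comparing `b`-coordinates in `p^j b - p^j b' = p^(j+1) g` over `ℤ_(p)`, where `B` is a basis of
`G_p`, gives `p^j = p^(j+1) c` with `c ∈ ℤ_(p)`. Cancelling `p^j` in the domain `ℤ_(p)` makes `p`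
a unit there, but `1/p` has denominator `p`. -/

theorem mem_zLocSet_iff {p : ℕ} {q : ℚ} : q ∈ ZLocSet p ↔ ¬ p ∣ q.den := by
  constructor
  · rintro ⟨a, b, hb, rfl⟩ hp
    have : (((a : ℚ) / b).den : ℤ) ∣ b := by
      rw [← Rat.divInt_eq_div]; exact Rat.den_dvd a b
    exact hb ((Int.natCast_dvd_natCast.mpr hp).trans this)
  · intro h
    exact ⟨q.num, q.den, by exact_mod_cast h, by simp [Rat.num_div_den]⟩

def zLocSubring {p : ℕ} (hp : p.Prime) : Subring ℚ where
  carrier := ZLocSet p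
  one_mem' := mem_zLocSet_iff.mpr (by simpa using hp.ne_one)
  zero_mem' := mem_zLocSet_iff.mpr (by simpa using hp.ne_one)
  mul_mem' {q q'} h h' := by
    simp only [mem_zLocSet_iff] at *
    exact fun hd => (hp.dvd_mul.mp (hd.trans (Rat.mul_den_dvd q q'))).elim h h'
  add_mem' {q q'} h h' := by
    simp only [mem_zLocSet_iff] at *
    exact fun hd => (hp.dvd_mul.mp (hd.trans (Rat.add_den_dvd q q'))).elim h h'
  neg_mem' {q} h := by
    simp only [mem_zLocSet_iff, Rat.den_neg_eq_den] at *
    exact h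

theorem not_isUnit_natCast_zLocSubring {p : ℕ} (hp : p.Prime) :
    ¬ IsUnit (p : zLocSubring hp) := by
  rintro ⟨⟨_, ⟨u, hu⟩, hpu, -⟩, rfl⟩
  have hu' : u = (p : ℚ)⁻¹ := eq_inv_of_mul_eq_one_right (congrArg Subtype.val hpu)
  refine mem_zLocSet_iff.mp hu ?_
  rw [hu', Rat.inv_natCast_den, if_neg hp.ne_zero]

theorem LinearIndepOn.isUnit_of_smul_sub_smul_eq_smul {R M ι : Type*} [CommRing R] [NoZeroDivisors R]
    [AddCommGroup M] [Module R M] {v : ι → M} {s : Set ι} (hv : LinearIndepOn R v s)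
    {i i' : ι} (hi : i ∈ s) (hi' : i' ∈ s) (hne : i ≠ i') {a π : R} (ha : a ≠ 0) {g : M}
    (hg : g ∈ Submodule.span R (v '' s)) (h : a • v i - a • v i' = (a * π) • g) :
    IsUnit π := by
  classical
  rw [Finsupp.span_image_eq_map_linearCombination] at hg
  obtain ⟨l, hl, rfl⟩ := hg
  set d := a • Finsupp.single i 1 - a • Finsupp.single i' 1 - (a * π) • l
  have hd : d ∈ Finsupp.supported R R s := by
    refine sub_mem (sub_mem (Submodule.smul_mem _ _ ?_) (Submodule.smul_mem _ _ ?_))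
      (Submodule.smul_mem _ _ hl) <;> exact Finsupp.single_mem_supported R _ ‹_›
  have hd0 : d = 0 := linearIndepOn_iff.mp hv d hd (by simp [d, h])
  have hdi : a * (1 - π * l i) = 0 := by
    simpa [d, hne, Finsupp.single_apply, mul_sub, mul_assoc] using congrArg (· i) hd0
  exact .of_mul_eq_one (l i)
    (sub_eq_zero.mp ((mul_eq_zero.mp hdi).resolve_left ha)).symm

theorem linearIndepOn_zLocSubring {p : ℕ} (hp : p.Prime) {B : Set ℝ}
    (hind : LinIndepOverZLoc p B) : LinearIndepOn (zLocSubring hp) id B := by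
  refine linearIndepOn_iff.mpr fun l hl hl0 => Finsupp.ext fun x => ?_
  by_cases hx : x ∈ l.support
  · refine Subtype.ext (hind l.support (fun x => l x) hl (fun x _ => (l x).2) ?_ x hx)
    simpa [Finsupp.linearCombination_apply, Finsupp.sum, Subring.smul_def, Rat.smul_def]
      using hl0
  · exact Finsupp.notMem_support_iff.mp hx

theorem gpSubgroup_le_span {p : ℕ} (hp : p.Prime) (B : Set ℝ) :
    GpSubgroup p B ≤ (Submodule.span (zLocSubring hp) B).toAddSubgroup := by
  refine AddSubgroup.closure_le _ |>.mpr ?_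
  rintro _ ⟨q, hq, b, hb, rfl⟩
  have : (⟨q, hq⟩ : zLocSubring hp) • b ∈ Submodule.span (zLocSubring hp) B :=
    Submodule.smul_mem _ _ (Submodule.subset_span hb)
  simpa [Subring.smul_def, Rat.smul_def] using this

/-- For distinct `b, b' ∈ B`, the elements `p^j • b` and `p^j • b'` lie in distinct
cosets of `p^{j+1} G_p`. -/
theorem distinct_cosets (p : ℕ) (hp : p.Prime) (B : Set ℝ)
    (hind : LinIndepOverZLoc p B) (j : ℕ) (b b' : ℝ)
    (hb : b ∈ B) (hb' : b' ∈ B) (hne : b ≠ b') :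
    ¬ ∃ g ∈ GpSubgroup p B, p ^ j • b - p ^ j • b' = p ^ (j + 1) • g := by
  rintro ⟨g, hg, heq⟩
  set R := zLocSubring hp
  have hg' : g ∈ Submodule.span R (id '' B) := by
    simpa using gpSubgroup_le_span hp B hg
  have hpj : ((p : R) ^ j) ≠ 0 := pow_ne_zero j (by simpa using hp.ne_zero)
  refine not_isUnit_natCast_zLocSubring hp <|
    (linearIndepOn_zLocSubring hp hind).isUnit_of_smul_sub_smul_eq_smul hb hb' hne hpj hg' ?_
  simpa [← Nat.cast_smul_eq_nsmul R, pow_succ] using heq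
end
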